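/- Let n, n' and m be nonnegative integers such that n+m is odd and n'+m is even. Then the partisan chocolate game position PC(n,m) is greater than or equal to PC(n',m) in the normal-play game order. -/

import Mathlib

universe u

namespace SetTheory

/-- Pre-games (removed from Mathlib; restored with the old Mathlib definition). -/
inductive PGame : Type (u + 1)
  | mk : ∀ α β : Type u, (α → PGame) → (β → PGame) → PGame

namespace PGame

/-- The pair (`x ≤ y`, `x ⧏ y`), defined by simultaneous recursion as in old Mathlib. -/
noncomputable def leLf : PGame.{u} → PGame.{u} → Prop × Prop
  | mk xl xr xL xR => fun y =>
    @PGame.rec (fun _ => Prop × Prop)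
      (fun yl yr yL yR IHyL IHyR =>
        ((∀ i, (leLf (xL i) (mk yl yr yL yR)).2) ∧ ∀ j, (IHyR j).2,
          (∃ i, (IHyL i).1) ∨ ∃ j, (leLf (xR j) (mk yl yr yL yR)).1)) y

/-- The normal-play order on pre-games. -/
noncomputable instance : LE PGame.{u} :=
  ⟨fun x y => (leLf x y).1⟩

end PGame

end SetTheory

open SetTheory

/-- The partisan chocolate game position `PC n m`.
Left options: `PC n' m` with `n' < n` and `n' + m` even, and `PC n m'` with `m' < m` and
`n + m'` even. Right options: the same with "odd" in place of "even". -/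
def PC : ℕ → ℕ → SetTheory.PGame
  | n, m =>
    SetTheory.PGame.mk
      {p : ℕ × ℕ // (p.2 = m ∧ p.1 < n ∧ Even (p.1 + m)) ∨ (p.1 = n ∧ p.2 < m ∧ Even (n + p.2))}
      {p : ℕ × ℕ // (p.2 = m ∧ p.1 < n ∧ Odd (p.1 + m)) ∨ (p.1 = n ∧ p.2 < m ∧ Odd (n + p.2))}
      (fun p => PC p.1.1 p.1.2)
      (fun p => PC p.1.1 p.1.2)
termination_by n m => n + m
decreasing_by
  all_goals rcases p.2 with ⟨h1, h2, -⟩ | ⟨h1, h2, -⟩ <;> omega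

/-!
Left moves lead to positions of even size `a + b`, Right moves to positions of odd size. Rank the
even positions by the weight `2 * (a / 2 + b / 2)`, put all of them below the odd positions, and rank
the odd positions by decreasing size; then `PC x ≤ PC y` whenever `x` has rank at most that of `y`.
By induction on the total size, every move is answered so that the ranks stay in order: a Left move
from an even position drops its weight by at least `2`, matched by a Left move in the other even
position dropping the weight by exactly `2`; a Right move from an odd position is matched by a Right
move lowering the size of the other odd position by `2`; and an even `x` against an odd `z` is settled
by Left moving `z` to an even position of weight `size z - 1` or, when `weight x ≥ size z`, by Right
moving `x` to an odd position of size `size x - 1 ≥ size z`.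
-/

namespace SetTheory.PGame

def LF (x y : PGame.{u}) : Prop := (leLf x y).2

infix:50 " ⧏ " => SetTheory.PGame.LF

theorem mk_le_mk_iff {xl xr : Type u} {xL : xl → PGame.{u}} {xR : xr → PGame.{u}}
    {yl yr : Type u} {yL : yl → PGame.{u}} {yR : yr → PGame.{u}} :
    mk xl xr xL xR ≤ mk yl yr yL yR ↔
      (∀ i, xL i ⧏ mk yl yr yL yR) ∧ ∀ j, mk xl xr xL xR ⧏ yR j :=
  Iff.rfl

theorem lf_mk_of_le_moveLeft {x : PGame.{u}} {yl yr : Type u} {yL : yl → PGame.{u}}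
    {yR : yr → PGame.{u}} {i : yl} (h : x ≤ yL i) : x ⧏ mk yl yr yL yR := by
  cases x
  exact Or.inl ⟨i, h⟩

theorem mk_lf_of_moveRight_le {xl xr : Type u} {xL : xl → PGame.{u}} {xR : xr → PGame.{u}}
    {y : PGame.{u}} {j : xr} (h : xR j ≤ y) : mk xl xr xL xR ⧏ y := by
  cases y
  exact Or.inr ⟨j, h⟩

end SetTheory.PGame

open SetTheory.PGame

namespace PC

def IsMove (x p : ℕ × ℕ) : Prop :=
  (p.2 = x.2 ∧ p.1 < x.1) ∨ (p.1 = x.1 ∧ p.2 < x.2)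

theorem IsMove.size_lt {x p : ℕ × ℕ} (h : IsMove x p) : p.1 + p.2 < x.1 + x.2 := by
  rcases h with ⟨h, hlt⟩ | ⟨h, hlt⟩ <;> omega

theorem isMove_fst {x : ℕ × ℕ} {a : ℕ} (h : a < x.1) : IsMove x (a, x.2) :=
  Or.inl ⟨rfl, h⟩

theorem isMove_snd {x : ℕ × ℕ} {b : ℕ} (h : b < x.2) : IsMove x (x.1, b) :=
  Or.inr ⟨rfl, h⟩

theorem option_iff (x p : ℕ × ℕ) (P : ℕ → Prop) :
    (p.2 = x.2 ∧ p.1 < x.1 ∧ P (p.1 + x.2)) ∨ (p.1 = x.1 ∧ p.2 < x.2 ∧ P (x.1 + p.2)) ↔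
      IsMove x p ∧ P (p.1 + p.2) := by
  obtain ⟨a, b⟩ := p
  constructor
  · rintro (⟨rfl, h, hP⟩ | ⟨rfl, h, hP⟩)
    exacts [⟨Or.inl ⟨rfl, h⟩, hP⟩, ⟨Or.inr ⟨rfl, h⟩, hP⟩]
  · rintro ⟨⟨rfl, h⟩ | ⟨rfl, h⟩, hP⟩
    exacts [Or.inl ⟨rfl, h, hP⟩, Or.inr ⟨rfl, h, hP⟩]

theorem eq_mk (n m : ℕ) : PC n m = mk
    {p : ℕ × ℕ // (p.2 = m ∧ p.1 < n ∧ Even (p.1 + m)) ∨ (p.1 = n ∧ p.2 < m ∧ Even (n + p.2))}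
    {p : ℕ × ℕ // (p.2 = m ∧ p.1 < n ∧ Odd (p.1 + m)) ∨ (p.1 = n ∧ p.2 < m ∧ Odd (n + p.2))}
    (fun p => PC p.1.1 p.1.2) (fun p => PC p.1.1 p.1.2) := by
  rw [PC]

section Moves

variable {x y p : ℕ × ℕ}

theorem le_of_forall
    (hl : ∀ p, IsMove x p → Even (p.1 + p.2) → PC p.1 p.2 ⧏ PC y.1 y.2)
    (hr : ∀ p, IsMove y p → Odd (p.1 + p.2) → PC x.1 x.2 ⧏ PC p.1 p.2) :
    PC x.1 x.2 ≤ PC y.1 y.2 := by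
  rw [eq_mk x.1 x.2, eq_mk y.1 y.2, mk_le_mk_iff]
  refine ⟨fun ⟨p, hp⟩ => ?_, fun ⟨p, hp⟩ => ?_⟩
  · rw [← eq_mk y.1 y.2]
    exact hl p ((option_iff x p Even).1 hp).1 ((option_iff x p Even).1 hp).2
  · rw [← eq_mk x.1 x.2]
    exact hr p ((option_iff y p Odd).1 hp).1 ((option_iff y p Odd).1 hp).2

theorem lf_of_le_leftMove (hp : IsMove y p) (he : Even (p.1 + p.2))
    (h : PC x.1 x.2 ≤ PC p.1 p.2) : PC x.1 x.2 ⧏ PC y.1 y.2 := by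
  rw [eq_mk y.1 y.2]
  exact lf_mk_of_le_moveLeft (i := ⟨p, (option_iff y p Even).2 ⟨hp, he⟩⟩) h

theorem lf_of_rightMove_le (hp : IsMove x p) (ho : Odd (p.1 + p.2))
    (h : PC p.1 p.2 ≤ PC y.1 y.2) : PC x.1 x.2 ⧏ PC y.1 y.2 := by
  rw [eq_mk x.1 x.2]
  exact mk_lf_of_moveRight_le (j := ⟨p, (option_iff x p Odd).2 ⟨hp, ho⟩⟩) h

end Moves

def weight (x : ℕ × ℕ) : ℕ := 2 * (x.1 / 2 + x.2 / 2)

section Weight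

variable {x : ℕ × ℕ}

theorem weight_le_size (x : ℕ × ℕ) : weight x ≤ x.1 + x.2 := by
  unfold weight
  omega

theorem weight_add_two_le_of_isMove {p : ℕ × ℕ} (hx : Even (x.1 + x.2)) (hp : IsMove x p)
    (he : Even (p.1 + p.2)) : weight p + 2 ≤ weight x := by
  rw [Nat.even_iff] at hx he
  unfold weight
  rcases hp with ⟨h, hlt⟩ | ⟨h, hlt⟩ <;> omega

theorem exists_even_move_of_odd (hx : Odd (x.1 + x.2)) :
    ∃ p, IsMove x p ∧ Even (p.1 + p.2) ∧ weight p + 1 = x.1 + x.2 := by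
  rw [Nat.odd_iff] at hx
  simp only [Nat.even_iff, weight]
  by_cases h : x.1 % 2 = 1
  · exact ⟨_, isMove_fst (a := x.1 - 1) (by omega), by omega, by omega⟩
  · exact ⟨_, isMove_snd (b := x.2 - 1) (by omega), by omega, by omega⟩

theorem exists_even_move_of_two_le_weight (hx : Even (x.1 + x.2)) (hw : 2 ≤ weight x) :
    ∃ p, IsMove x p ∧ Even (p.1 + p.2) ∧ weight p + 2 = weight x := by
  rw [Nat.even_iff] at hx
  simp only [Nat.even_iff, weight] at hw ⊢
  by_cases h : 2 ≤ x.1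
  · exact ⟨_, isMove_fst (a := x.1 - 2) (by omega), by omega, by omega⟩
  · exact ⟨_, isMove_snd (b := x.2 - 2) (by omega), by omega, by omega⟩

theorem exists_odd_move_of_even (hx : Even (x.1 + x.2)) (h0 : 0 < x.1 + x.2) :
    ∃ p, IsMove x p ∧ Odd (p.1 + p.2) ∧ p.1 + p.2 + 1 = x.1 + x.2 := by
  rw [Nat.even_iff] at hx
  simp only [Nat.odd_iff]
  by_cases h : 0 < x.1
  · exact ⟨_, isMove_fst (a := x.1 - 1) (by omega), by omega, by omega⟩
  · exact ⟨_, isMove_snd (b := x.2 - 1) (by omega), by omega, by omega⟩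

theorem exists_odd_move_of_odd (hx : Odd (x.1 + x.2)) (h3 : 3 ≤ x.1 + x.2) :
    ∃ p, IsMove x p ∧ Odd (p.1 + p.2) ∧ p.1 + p.2 + 2 = x.1 + x.2 := by
  rw [Nat.odd_iff] at hx
  simp only [Nat.odd_iff]
  by_cases h : 2 ≤ x.1
  · exact ⟨_, isMove_fst (a := x.1 - 2) (by omega), by omega, by omega⟩
  · exact ⟨_, isMove_snd (b := x.2 - 2) (by omega), by omega, by omega⟩

end Weight

def RankLE (x y : ℕ × ℕ) : Prop :=
  Even (x.1 + x.2) ∧ Odd (y.1 + y.2) ∨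
    Even (x.1 + x.2) ∧ Even (y.1 + y.2) ∧ weight x ≤ weight y ∨
    Odd (x.1 + x.2) ∧ Odd (y.1 + y.2) ∧ y.1 + y.2 ≤ x.1 + x.2

section RankLE

variable {x y : ℕ × ℕ}

theorem RankLE.of_even_right (h : RankLE x y) (hy : Even (y.1 + y.2)) :
    Even (x.1 + x.2) ∧ weight x ≤ weight y := by
  rcases h with ⟨-, hy'⟩ | ⟨hx, -, hw⟩ | ⟨-, hy', -⟩
  · exact (Nat.not_even_iff_odd.2 hy' hy).elim
  · exact ⟨hx, hw⟩
  · exact (Nat.not_even_iff_odd.2 hy' hy).elim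

theorem RankLE.of_odd_left (h : RankLE x y) (hx : Odd (x.1 + x.2)) :
    Odd (y.1 + y.2) ∧ y.1 + y.2 ≤ x.1 + x.2 := by
  rcases h with ⟨hx', -⟩ | ⟨hx', -, -⟩ | ⟨-, hy, hs⟩
  · exact (Nat.not_even_iff_odd.2 hx hx').elim
  · exact (Nat.not_even_iff_odd.2 hx hx').elim
  · exact ⟨hy, hs⟩

theorem lf_of_even_of_odd
    (ih : ∀ x' y' : ℕ × ℕ, x'.1 + x'.2 + (y'.1 + y'.2) < x.1 + x.2 + (y.1 + y.2) →
      RankLE x' y' → PC x'.1 x'.2 ≤ PC y'.1 y'.2)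
    (hx : Even (x.1 + x.2)) (hy : Odd (y.1 + y.2)) : PC x.1 x.2 ⧏ PC y.1 y.2 := by
  have hwx := weight_le_size x
  by_cases hw : weight x + 1 ≤ y.1 + y.2
  · obtain ⟨q, hq, hqe, hqw⟩ := exists_even_move_of_odd hy
    have := hq.size_lt
    exact lf_of_le_leftMove hq hqe (ih x q (by omega) (Or.inr (Or.inl ⟨hx, hqe, by omega⟩)))
  · have hwy : y.1 + y.2 + 1 ≤ weight x := by
      rw [Nat.odd_iff] at hy
      unfold weight at hw ⊢
      omega
    obtain ⟨q, hq, hqo, hqs⟩ := exists_odd_move_of_even hx (by omega)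
    exact lf_of_rightMove_le hq hqo (ih q y (by omega) (Or.inr (Or.inr ⟨hqo, hy, by omega⟩)))

theorem le_of_rankLE (x y : ℕ × ℕ) (h : RankLE x y) : PC x.1 x.2 ≤ PC y.1 y.2 := by
  induction hN : x.1 + x.2 + (y.1 + y.2) using Nat.strong_induction_on generalizing x y with
  | _ N ih =>
  subst hN
  have ih' : ∀ x' y' : ℕ × ℕ, x'.1 + x'.2 + (y'.1 + y'.2) < x.1 + x.2 + (y.1 + y.2) →
      RankLE x' y' → PC x'.1 x'.2 ≤ PC y'.1 y'.2 :=
    fun x' y' hlt h' => ih _ hlt x' y' h' rfl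
  refine le_of_forall (fun p hp hpe => ?_) (fun p hp hpo => ?_)
  · have hps := hp.size_lt
    obtain hye | hyo := Nat.even_or_odd (y.1 + y.2)
    · obtain ⟨hxe, hw⟩ := h.of_even_right hye
      have := weight_add_two_le_of_isMove hxe hp hpe
      obtain ⟨q, hq, hqe, hqw⟩ := exists_even_move_of_two_le_weight hye (by omega)
      have := hq.size_lt
      exact lf_of_le_leftMove hq hqe (ih' p q (by omega) (Or.inr (Or.inl ⟨hpe, hqe, by omega⟩)))
    · exact lf_of_even_of_odd (fun x' y' hlt => ih' x' y' (by omega)) hpe hyo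
  · have hps := hp.size_lt
    obtain hxe | hxo := Nat.even_or_odd (x.1 + x.2)
    · exact lf_of_even_of_odd (fun x' y' hlt => ih' x' y' (by omega)) hxe hpo
    · obtain ⟨hyo, hs⟩ := h.of_odd_left hxo
      have hgap : p.1 + p.2 + 2 ≤ x.1 + x.2 := by
        rw [Nat.odd_iff] at hxo hyo hpo
        omega
      obtain ⟨q, hq, hqo, hqs⟩ := exists_odd_move_of_odd hxo (by rw [Nat.odd_iff] at hpo; omega)
      exact lf_of_rightMove_le hq hqo (ih' q p (by omega) (Or.inr (Or.inr ⟨hqo, hpo, by omega⟩)))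

end RankLE

end PC

theorem stmt_5 (n n' m : ℕ) (hn : Odd (n + m)) (hn' : Even (n' + m)) :
    PC n' m ≤ PC n m :=
  PC.le_of_rankLE (n', m) (n, m) (Or.inl ⟨hn', hn⟩)
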